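/- Let I ∈ P'_n and let A ∈ L(n) be I-generic, i.e., for every B ∈ X_A = O_A ∩ L_I(n), the real vector space sum of L_I(n) and {XB − BX : X an n×n skew-hermitian matrix} equals L(n). Let U_A = {g ∈ U(n) : g⁻¹ A g ∈ L_I(n)}. Then the map sending the right coset g·T_n to the T_n-conjugation orbit of g⁻¹ A g is a well-defined bijection from U_A/T_n onto X_A/T_n. In particular, if g_1, g_2 ∈ U(n) satisfy g_1⁻¹ A g_1 ∈ L_I(n), g_2⁻¹ A g_2 ∈ L_I(n) and g_1⁻¹ A g_1 = t⁻¹ (g_2⁻¹ A g_2) t for some t ∈ T_n, then g_1⁻¹ g_2 t ∈ T_n. -/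

import Mathlib

/-- Membership in `L_I(n)` (only the vanishing conditions; positions are 1-based). -/
def VanishesOn (n : ℕ) (I : Finset (ℕ × ℕ)) (B : Matrix (Fin n) (Fin n) ℂ) : Prop :=
  ∀ i j : Fin n, ((i : ℕ) + 1, (j : ℕ) + 1) ∈ I → B i j = 0

/-- Membership in the maximal torus `T_n` of diagonal unitary matrices. -/
def IsDiagUnitary (n : ℕ) (t : Matrix (Fin n) (Fin n) ℂ) : Prop :=
  t ∈ Matrix.unitaryGroup (Fin n) ℂ ∧ t.IsDiag

/-!
Fix `B ∈ X_A`. Genericity of `A` at `B` says that the `ℝ`-linear map `X ↦ ([X, B]ᵢⱼ)_{(i,j) ∈ I}`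
from the skew-hermitian matrices (real dimension `n²`) to `ℂ^I` (real dimension `n(n-1)`) is
surjective, so its kernel has dimension at most `n`. Since `B` vanishes on `I`, the diagonal
skew-hermitian matrices, a space of dimension `n`, lie in that kernel, so they exhaust it: every
skew-hermitian matrix commuting with `B` is diagonal, and hence so is every unitary `u` commuting
with `B`, as `u - u*` and `i (u + u*)` are skew-hermitian and commute with `B`.
If `g₁⁻¹ A g₁ = t⁻¹ (g₂⁻¹ A g₂) t`, then `g₁⁻¹ g₂ t` is such a unitary for `B = g₁⁻¹ A g₁`.
-/

open Module Finset

section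
variable {R A : Type*} [Semiring R] [StarMul R] [TrivialStar R] [Invertible (2 : R)]
  [AddCommGroup A] [Module R A] [StarAddMonoid A] [StarModule R A] [Module.Finite R A]

instance : Module.Finite R (selfAdjoint A) :=
  .of_surjective (selfAdjointPart R) fun x => ⟨x, x.2.selfAdjointPart_apply R⟩

instance : Module.Finite R (skewAdjoint A) :=
  .of_surjective (skewAdjointPart R) fun x =>
    ⟨x, LinearMap.congr_fun (skewAdjointPart_comp_subtype_skewAdjoint R (A := A)) x⟩

end

theorem Unitary.mul_star_cancel_left_of_mem {R : Type*} [Monoid R] [StarMul R] {u : R}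
    (hu : u ∈ unitary R) (x : R) : u * (star u * x) = x := by
  rw [← mul_assoc, Unitary.mul_star_self_of_mem hu, one_mul]

theorem finrank_skewAdjoint_le {A : Type*} [AddCommGroup A] [Module ℂ A] [StarAddMonoid A]
    [StarModule ℂ A] [FiniteDimensional ℂ A] : finrank ℝ (skewAdjoint A) ≤ finrank ℂ A := by
  have hsum := (StarModule.decomposeProdAdjoint ℝ A).finrank_eq
  rw [finrank_prod] at hsum
  have hle : finrank ℝ (skewAdjoint A) ≤ finrank ℝ (selfAdjoint A) :=
    LinearMap.finrank_le_finrank_of_injective (f := skewAdjoint.negISMul) fun a b h =>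
      Subtype.ext <| by rw [← skewAdjoint.I_smul_neg_I a, ← skewAdjoint.I_smul_neg_I b, h]
  have := finrank_real_of_complex A
  omega

namespace Matrix

variable {ι : Type*} [Fintype ι] [DecidableEq ι]

theorem IsDiag.mul {α : Type*} [NonUnitalNonAssocSemiring α] {A B : Matrix ι ι α}
    (hA : A.IsDiag) (hB : B.IsDiag) : (A * B).IsDiag := by
  rw [← hA.diagonal_diag, ← hB.diagonal_diag, diagonal_mul_diagonal]
  exact isDiag_diagonal _

def commutatorEntries (J : Finset (ι × ι)) (B : Matrix ι ι ℂ) :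
    skewAdjoint (Matrix ι ι ℂ) →ₗ[ℝ] (J → ℂ) where
  toFun X p := ((X : Matrix ι ι ℂ) * B - B * X) p.1.1 p.1.2
  map_add' X Y := by ext; simp [add_mul, mul_add]; ring
  map_smul' r X := by ext; simp [smul_sub]

variable (ι) in
def diagonalSkew : (ι → ℝ) →ₗ[ℝ] skewAdjoint (Matrix ι ι ℂ) where
  toFun x := ⟨Complex.I • diagonal fun i => (x i : ℂ), by
    rw [skewAdjoint.mem_iff, star_smul, star_eq_conjTranspose, diagonal_conjTranspose]
    simp⟩
  map_add' x y := by ext : 1; simp [← smul_add, diagonal_add]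
  map_smul' r x := by ext : 1; simp [smul_comm _ Complex.I, ← diagonal_smul]

theorem diagonalSkew_injective : Function.Injective (diagonalSkew ι) := by
  intro x y h
  ext i
  simpa [diagonalSkew] using congrFun₂ (congrArg Subtype.val h) i i

theorem commutatorEntries_diagonalSkew {J : Finset (ι × ι)} {B : Matrix ι ι ℂ}
    (hB : ∀ p ∈ J, B p.1 p.2 = 0) (x : ι → ℝ) :
    commutatorEntries J B (diagonalSkew ι x) = 0 := by
  ext p
  simp [commutatorEntries, diagonalSkew, hB p.1 p.2]

theorem isDiag_of_commute_of_mem_skewAdjoint {J : Finset (ι × ι)} {B : Matrix ι ι ℂ}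
    (hB : ∀ p ∈ J, B p.1 p.2 = 0) (hJ : Fintype.card ι * (Fintype.card ι - 1) ≤ 2 * #J)
    (hsurj : Function.Surjective (commutatorEntries J B))
    {X : Matrix ι ι ℂ} (hX : X ∈ skewAdjoint (Matrix ι ι ℂ)) (hXB : Commute X B) :
    X.IsDiag := by
  set F := commutatorEntries J B
  have hrank := F.finrank_range_add_finrank_ker
  rw [LinearMap.range_eq_top.mpr hsurj, finrank_top, finrank_real_of_complex,
    finrank_fintype_fun_eq_card, Fintype.card_coe] at hrank
  have hskew : finrank ℝ (skewAdjoint (Matrix ι ι ℂ)) ≤ Fintype.card ι * Fintype.card ι := by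
    simpa [finrank_matrix] using finrank_skewAdjoint_le (A := Matrix ι ι ℂ)
  have hker_le : finrank ℝ (LinearMap.ker F) ≤ finrank ℝ (LinearMap.range (diagonalSkew ι)) := by
    rw [LinearMap.finrank_range_of_inj diagonalSkew_injective, finrank_fintype_fun_eq_card]
    have := Nat.le_mul_self (Fintype.card ι)
    rw [Nat.mul_sub_one] at hJ
    omega
  have hker : LinearMap.range (diagonalSkew ι) = LinearMap.ker F :=
    Submodule.eq_of_le_of_finrank_le
      (LinearMap.range_le_ker_iff.mpr (LinearMap.ext (commutatorEntries_diagonalSkew hB))) hker_le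
  have hXker : (⟨X, hX⟩ : skewAdjoint (Matrix ι ι ℂ)) ∈ LinearMap.ker F := by
    ext p
    simp [F, commutatorEntries, hXB.eq]
  obtain ⟨x, hx⟩ := hker ▸ hXker
  rw [show X = _ from congrArg Subtype.val hx.symm]
  exact (isDiag_diagonal _).smul _

theorem commutatorEntries_surjective {J : Finset (ι × ι)} {B : Matrix ι ι ℂ}
    (hJ : ∀ p ∈ J, p.1 ≠ p.2)
    (hgen : ∀ Y : Matrix ι ι ℂ, Y.trace = 0 → ∃ Z X : Matrix ι ι ℂ,
      (∀ p ∈ J, Z p.1 p.2 = 0) ∧ X ∈ skewAdjoint (Matrix ι ι ℂ) ∧ Y = Z + (X * B - B * X)) :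
    Function.Surjective (commutatorEntries J B) := by
  intro v
  let Y : Matrix ι ι ℂ := of fun i j => if h : (i, j) ∈ J then v ⟨_, h⟩ else 0
  have hY : Y.trace = 0 := Finset.sum_eq_zero fun i _ => dif_neg fun h => hJ _ h rfl
  obtain ⟨Z, X, hZ, hX, hYZ⟩ := hgen Y hY
  refine ⟨⟨X, hX⟩, funext fun p => ?_⟩
  have hp := congrFun₂ hYZ p.1.1 p.1.2
  simp only [Y, of_apply, dif_pos p.2, add_apply, hZ p.1 p.2, zero_add] at hp
  exact hp.symm

theorem isDiag_of_commute_of_mem_unitary {J : Finset (ι × ι)} {B : Matrix ι ι ℂ}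
    (hB : ∀ p ∈ J, B p.1 p.2 = 0) (hJ : Fintype.card ι * (Fintype.card ι - 1) ≤ 2 * #J)
    (hsurj : Function.Surjective (commutatorEntries J B))
    {u : Matrix ι ι ℂ} (hu : u ∈ unitary (Matrix ι ι ℂ)) (huB : Commute u B) :
    u.IsDiag := by
  have hstar : Commute (star u) B :=
    (commute_unitary_iff_star_right_conjugate (Unitary.star_mem hu)).mpr <| by
      rw [star_star]; exact (commute_unitary_iff_star_left_conjugate hu).mp huB
  have hskew : (u - star u).IsDiag :=
    isDiag_of_commute_of_mem_skewAdjoint hB hJ hsurj (by simp [skewAdjoint.mem_iff])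
      (huB.sub_left hstar)
  have hherm : (Complex.I • (u + star u)).IsDiag :=
    isDiag_of_commute_of_mem_skewAdjoint hB hJ hsurj
      (Complex.I_smul_mem_skewAdjoint_iff_isSelfAdjoint.mpr (IsSelfAdjoint.add_star_self u))
      ((huB.add_left hstar).smul_left _)
  have hu_eq : u = (2⁻¹ : ℂ) • ((-Complex.I) • (Complex.I • (u + star u)) + (u - star u)) := by
    rw [smul_smul, neg_mul, Complex.I_mul_I, neg_neg, one_smul]
    module
  rw [hu_eq]
  exact ((hherm.smul _).add hskew).smul _

end Matrix

variable {n : ℕ} {I : Finset (ℕ × ℕ)}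

/-- `I` re-indexed by `Fin n`: the pattern uses 1-based positions. -/
def finPositions (n : ℕ) (I : Finset (ℕ × ℕ)) : Finset (Fin n × Fin n) :=
  {p | ((p.1 : ℕ) + 1, (p.2 : ℕ) + 1) ∈ I}

theorem vanishesOn_iff_forall_mem_finPositions {B : Matrix (Fin n) (Fin n) ℂ} :
    VanishesOn n I B ↔ ∀ p ∈ finPositions n I, B p.1 p.2 = 0 := by
  simp [VanishesOn, finPositions]

theorem ne_of_mem_finPositions (hI : ∀ p ∈ I, p.1 ≠ p.2) {p : Fin n × Fin n}
    (hp : p ∈ finPositions n I) : p.1 ≠ p.2 := fun h => by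
  simpa [h] using hI _ (mem_filter.mp hp).2

theorem card_finPositions (hI : I ⊆ Icc 1 n ×ˢ Icc 1 n) : #(finPositions n I) = #I := by
  refine card_bij (fun p _ => ((p.1 : ℕ) + 1, (p.2 : ℕ) + 1)) (fun p hp => (mem_filter.mp hp).2)
    (fun p _ q _ h => ?_) (fun q hq => ?_)
  · simp only [Prod.mk.injEq, add_left_inj] at h
    exact Prod.ext (Fin.ext h.1) (Fin.ext h.2)
  · have := mem_product.mp (hI hq)
    simp only [mem_Icc] at this
    have hq' : (q.1 - 1 + 1, q.2 - 1 + 1) = q := by ext <;> simp <;> omega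
    exact ⟨(⟨q.1 - 1, by omega⟩, ⟨q.2 - 1, by omega⟩), by simpa [finPositions, hq'], hq'⟩

theorem IsDiagUnitary.mul {s t : Matrix (Fin n) (Fin n) ℂ} (hs : IsDiagUnitary n s)
    (ht : IsDiagUnitary n t) : IsDiagUnitary n (s * t) :=
  ⟨mul_mem hs.1 ht.1, hs.2.mul ht.2⟩

theorem IsDiagUnitary.star {t : Matrix (Fin n) (Fin n) ℂ} (ht : IsDiagUnitary n t) :
    IsDiagUnitary n (star t) :=
  ⟨Unitary.star_mem ht.1, ht.2.conjTranspose⟩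

theorem isDiag_of_commute_of_vanishesOn (hIsub : I ⊆ Icc 1 n ×ˢ Icc 1 n)
    (hIstrict : ∀ p ∈ I, p.1 ≠ p.2) (hIcard : #I = n * (n - 1) / 2)
    {B : Matrix (Fin n) (Fin n) ℂ} (hB : VanishesOn n I B)
    (hgen : ∀ Y : Matrix (Fin n) (Fin n) ℂ, Y.trace = 0 →
      ∃ Z X : Matrix (Fin n) (Fin n) ℂ,
        (Z.trace = 0 ∧ VanishesOn n I Z) ∧ X.conjTranspose = -X ∧ Y = Z + (X * B - B * X))
    {u : Matrix (Fin n) (Fin n) ℂ} (hu : u ∈ Matrix.unitaryGroup (Fin n) ℂ) (huB : Commute u B) :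
    u.IsDiag := by
  refine Matrix.isDiag_of_commute_of_mem_unitary
    (vanishesOn_iff_forall_mem_finPositions.mp hB) ?_ ?_ hu huB
  · rw [card_finPositions hIsub, hIcard, Fintype.card_fin,
      Nat.mul_div_cancel' (Nat.even_mul_pred_self n).two_dvd]
  · refine Matrix.commutatorEntries_surjective (fun p => ne_of_mem_finPositions hIstrict) ?_
    intro Y hY
    obtain ⟨Z, X, ⟨-, hZ⟩, hX, hYZ⟩ := hgen Y hY
    exact ⟨Z, X, vanishesOn_iff_forall_mem_finPositions.mp hZ, skewAdjoint.mem_iff.mpr hX, hYZ⟩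

theorem isDiagUnitary_of_conj_eq (hIsub : I ⊆ Icc 1 n ×ˢ Icc 1 n)
    (hIstrict : ∀ p ∈ I, p.1 ≠ p.2) (hIcard : #I = n * (n - 1) / 2)
    {A : Matrix (Fin n) (Fin n) ℂ}
    (hgen : ∀ B : Matrix (Fin n) (Fin n) ℂ,
      (∃ U ∈ Matrix.unitaryGroup (Fin n) ℂ, B = U * A * star U) →
      VanishesOn n I B →
      ∀ Y : Matrix (Fin n) (Fin n) ℂ, Y.trace = 0 →
        ∃ Z X : Matrix (Fin n) (Fin n) ℂ,
          (Z.trace = 0 ∧ VanishesOn n I Z) ∧ X.conjTranspose = -X ∧ Y = Z + (X * B - B * X))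
    {g₁ g₂ t : Matrix (Fin n) (Fin n) ℂ} (h₁ : g₁ ∈ Matrix.unitaryGroup (Fin n) ℂ)
    (h₂ : g₂ ∈ Matrix.unitaryGroup (Fin n) ℂ) (ht : IsDiagUnitary n t)
    (hv : VanishesOn n I (star g₁ * A * g₁))
    (heq : star g₁ * A * g₁ = star t * (star g₂ * A * g₂) * t) :
    IsDiagUnitary n (star g₁ * g₂ * t) := by
  have hu : star g₁ * g₂ * t ∈ Matrix.unitaryGroup (Fin n) ℂ :=
    mul_mem (mul_mem (Unitary.star_mem h₁) h₂) ht.1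
  have hcomm : Commute (star g₁ * g₂ * t) (star g₁ * A * g₁) := by
    refine (commute_unitary_iff_star_left_conjugate hu).mpr ?_
    conv_rhs => rw [heq]
    simp only [star_mul, star_star, mul_assoc, Unitary.mul_star_cancel_left_of_mem h₁]
  exact ⟨hu, isDiag_of_commute_of_vanishesOn hIsub hIstrict hIcard hv
    (hgen _ ⟨star g₁, Unitary.star_mem h₁, by rw [star_star]⟩ hv) hu hcomm⟩

theorem reducing_flags_bijection_general (n : ℕ) (I : Finset (ℕ × ℕ))
    (hIsub : I ⊆ Finset.Icc 1 n ×ˢ Finset.Icc 1 n)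
    (hIstrict : ∀ p ∈ I, p.1 ≠ p.2)
    (hIcard : I.card = n * (n - 1) / 2)
    (A : Matrix (Fin n) (Fin n) ℂ)
    (hgen : ∀ B : Matrix (Fin n) (Fin n) ℂ,
      (∃ U ∈ Matrix.unitaryGroup (Fin n) ℂ, B = U * A * star U) →
      VanishesOn n I B →
      ∀ Y : Matrix (Fin n) (Fin n) ℂ, Y.trace = 0 →
        ∃ Z X : Matrix (Fin n) (Fin n) ℂ,
          (Z.trace = 0 ∧ VanishesOn n I Z) ∧ X.conjTranspose = -X ∧ Y = Z + (X * B - B * X)) :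
    -- The induced map `U_A / T_n → X_A / T_n` is well defined and injective:
    (∀ g₁, g₁ ∈ Matrix.unitaryGroup (Fin n) ℂ → VanishesOn n I (star g₁ * A * g₁) →
      ∀ g₂, g₂ ∈ Matrix.unitaryGroup (Fin n) ℂ → VanishesOn n I (star g₂ * A * g₂) →
        ((∃ t, IsDiagUnitary n t ∧ g₂ = g₁ * t) ↔
          (∃ t, IsDiagUnitary n t ∧
            star g₂ * A * g₂ = star t * (star g₁ * A * g₁) * t))) ∧
    -- and surjective:
    (∀ B : Matrix (Fin n) (Fin n) ℂ,
      (∃ U ∈ Matrix.unitaryGroup (Fin n) ℂ, B = U * A * star U) →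
      VanishesOn n I B →
      ∃ g ∈ Matrix.unitaryGroup (Fin n) ℂ, star g * A * g = B) ∧
    -- In particular:
    (∀ g₁ g₂ t : Matrix (Fin n) (Fin n) ℂ,
      g₁ ∈ Matrix.unitaryGroup (Fin n) ℂ → g₂ ∈ Matrix.unitaryGroup (Fin n) ℂ →
      IsDiagUnitary n t →
      VanishesOn n I (star g₁ * A * g₁) → VanishesOn n I (star g₂ * A * g₂) →
      star g₁ * A * g₁ = star t * (star g₂ * A * g₂) * t →
      IsDiagUnitary n (star g₁ * g₂ * t)) := by
  refine ⟨fun g₁ h₁ hv₁ g₂ h₂ hv₂ => ⟨?_, ?_⟩, ?_, fun g₁ g₂ t h₁ h₂ ht hv₁ _ =>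
    isDiagUnitary_of_conj_eq hIsub hIstrict hIcard hgen h₁ h₂ ht hv₁⟩
  · rintro ⟨t, ht, rfl⟩
    exact ⟨t, ht, by simp only [star_mul, mul_assoc]⟩
  · rintro ⟨t, ht, heq⟩
    refine ⟨t * star (star g₂ * g₁ * t), ht.mul
      (isDiagUnitary_of_conj_eq hIsub hIstrict hIcard hgen h₂ h₁ ht hv₂ heq).star, ?_⟩
    simp only [star_mul, star_star, mul_assoc, Unitary.mul_star_cancel_left_of_mem ht.1,
      Unitary.mul_star_cancel_left_of_mem h₁]
  · rintro B ⟨U, hU, rfl⟩ -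
    exact ⟨star U, Unitary.star_mem hU, by rw [star_star]⟩

/-- For `I ∈ P'_n` and an `I`-generic `A ∈ L(n)`, the map `g T_n ↦ T_n`-orbit of
`g⁻¹ A g` is a well-defined bijection from `U_A / T_n` onto `X_A / T_n`; in
particular, if `g₁⁻¹ A g₁, g₂⁻¹ A g₂ ∈ L_I(n)` and `g₁⁻¹ A g₁ = t⁻¹ (g₂⁻¹ A g₂) t`
for some `t ∈ T_n`, then `g₁⁻¹ g₂ t ∈ T_n`. -/
theorem reducing_flags_bijection (n : ℕ) (I : Finset (ℕ × ℕ))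
    (hIsub : I ⊆ Finset.Icc 1 n ×ˢ Finset.Icc 1 n)
    (hIstrict : ∀ p ∈ I, p.1 ≠ p.2)
    (hIcard : I.card = n * (n - 1) / 2)
    (A : Matrix (Fin n) (Fin n) ℂ) (hA : A.trace = 0)
    (hgen : ∀ B : Matrix (Fin n) (Fin n) ℂ,
      (∃ U ∈ Matrix.unitaryGroup (Fin n) ℂ, B = U * A * star U) →
      VanishesOn n I B →
      ∀ Y : Matrix (Fin n) (Fin n) ℂ, Y.trace = 0 →
        ∃ Z X : Matrix (Fin n) (Fin n) ℂ,
          (Z.trace = 0 ∧ VanishesOn n I Z) ∧ X.conjTranspose = -X ∧ Y = Z + (X * B - B * X)) :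
    -- The induced map `U_A / T_n → X_A / T_n` is well defined and injective:
    (∀ g₁, g₁ ∈ Matrix.unitaryGroup (Fin n) ℂ → VanishesOn n I (star g₁ * A * g₁) →
      ∀ g₂, g₂ ∈ Matrix.unitaryGroup (Fin n) ℂ → VanishesOn n I (star g₂ * A * g₂) →
        ((∃ t, IsDiagUnitary n t ∧ g₂ = g₁ * t) ↔
          (∃ t, IsDiagUnitary n t ∧
            star g₂ * A * g₂ = star t * (star g₁ * A * g₁) * t))) ∧
    -- and surjective:
    (∀ B : Matrix (Fin n) (Fin n) ℂ,
      (∃ U ∈ Matrix.unitaryGroup (Fin n) ℂ, B = U * A * star U) →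
      VanishesOn n I B →
      ∃ g ∈ Matrix.unitaryGroup (Fin n) ℂ, star g * A * g = B) ∧
    -- In particular:
    (∀ g₁ g₂ t : Matrix (Fin n) (Fin n) ℂ,
      g₁ ∈ Matrix.unitaryGroup (Fin n) ℂ → g₂ ∈ Matrix.unitaryGroup (Fin n) ℂ →
      IsDiagUnitary n t →
      VanishesOn n I (star g₁ * A * g₁) → VanishesOn n I (star g₂ * A * g₂) →
      star g₁ * A * g₁ = star t * (star g₂ * A * g₂) * t →
      IsDiagUnitary n (star g₁ * g₂ * t)) :=
  reducing_flags_bijection_general n I hIsub hIstrict hIcard A hgen
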